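/- Let X be a symmetric 0-1 matrix of size n = q²+q+1 with N² = qI + J and row sums q+1 (a polarity graph of PG(2,q) with a absolute/looped vertices, a = trace of N). Then any independent set S in the corresponding graph satisfies |S| ≤ (sqrt(q) + sqrt(q + 4a(q+sqrt(q)+1)/(q²+q+1))) / (2(q+sqrt(q)+1)/(q²+q+1)). -/

import Mathlib

/-!
Write `r = √q`, `n = q² + q + 1` and `c = (q + r + 1) / n`. Then `c` is a root of
`n c² - 2 (q + 1) c + 1 = 0`, which is exactly what makes the `J`-terms cancel in the square of
`A = N + r I - c J`, leaving `A² = 2 r A`; so `A` is positive semidefinite. Its quadratic form at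
the indicator vector of an independent set `S` is at most `a + r |S| - c |S|²`, and solving
`c |S|² - r |S| ≤ a` for `|S|` gives the bound.
-/

open Matrix Finset

variable {ι : Type*} [Fintype ι]

theorem Matrix.PosSemidef.of_mul_self_eq_smul {A : Matrix ι ι ℝ} (hA : A.IsSymm) {t : ℝ}
    (ht : 0 < t) (h : A * A = t • A) : A.PosSemidef := by
  have : A = t⁻¹ • (Aᴴ * A) := by
    rw [conjTranspose_eq_transpose_of_trivial, hA.eq, h, smul_smul, inv_mul_cancel₀ ht.ne',
      one_smul]
  rw [this]
  exact (posSemidef_conjTranspose_mul_self A).smul (inv_nonneg.mpr ht.le)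

theorem indicator_dotProduct_mulVec_indicator {R : Type*} [CommSemiring R] (M : Matrix ι ι R)
    (S : Finset ι) [DecidablePred (· ∈ S)] :
    (fun i => if i ∈ S then 1 else 0) ⬝ᵥ (M *ᵥ fun i => if i ∈ S then 1 else 0)
      = ∑ i ∈ S, ∑ j ∈ S, M i j := by
  simp [dotProduct, mulVec]

theorem sum_sum_le_trace_of_independent (N : Matrix ι ι ℝ) (hdiag : ∀ i, 0 ≤ N i i)
    (S : Finset ι) (hind : ∀ i ∈ S, ∀ j ∈ S, i ≠ j → N i j = 0) :
    ∑ i ∈ S, ∑ j ∈ S, N i j ≤ N.trace := by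
  calc ∑ i ∈ S, ∑ j ∈ S, N i j = ∑ i ∈ S, N i i :=
        Finset.sum_congr rfl fun i hi =>
          Finset.sum_eq_single_of_mem i hi fun j hj hji => hind i hi j hj hji.symm
    _ ≤ ∑ i, N i i := Finset.sum_le_sum_of_subset_of_nonneg (subset_univ S) fun i _ _ => hdiag i

theorem le_of_mul_sq_sub_mul_le {a c r s : ℝ} (hc : 0 < c) (h : c * s ^ 2 - r * s ≤ a) :
    s ≤ (r + √(r ^ 2 + 4 * a * c)) / (2 * c) := by
  have hsq : (2 * c * s - r) ^ 2 ≤ r ^ 2 + 4 * a * c := by nlinarith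
  rw [le_div_iff₀ (by positivity)]
  linarith [(abs_le.mp (Real.abs_le_sqrt hsq)).2]

section Polarity

variable {N : Matrix ι ι ℝ} {q : ℝ}

theorem mul_allOnes_of_rowSum (hrow : ∀ i, ∑ j, N i j = q + 1) :
    N * of (fun _ _ => (1 : ℝ)) = (q + 1) • of (fun _ _ => 1) := by
  ext i j
  simp [mul_apply, hrow i]

theorem allOnes_mul_of_rowSum (hsym : N.IsSymm) (hrow : ∀ i, ∑ j, N i j = q + 1) :
    of (fun _ _ => (1 : ℝ)) * N = (q + 1) • of (fun _ _ => 1) := by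
  ext i j
  simp [mul_apply, ← hrow j, ← hsym.apply j]

theorem shifted_mul_self_eq_smul [DecidableEq ι] (hsym : N.IsSymm)
    (hN2 : N * N = q • (1 : Matrix ι ι ℝ) + of (fun _ _ => 1))
    (hrow : ∀ i, ∑ j, N i j = q + 1) {r c : ℝ} (hr : r ^ 2 = q)
    (hc : Fintype.card ι * c ^ 2 - 2 * (q + 1) * c + 1 = 0) :
    (N + r • 1 - c • of (fun _ _ => 1)) * (N + r • 1 - c • of (fun _ _ => 1))
      = (2 * r) • (N + r • 1 - c • of (fun _ _ => 1)) := by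
  have hJJ : of (fun _ _ => (1 : ℝ)) * of (fun _ _ => 1) =
      (Fintype.card ι : ℝ) • of (fun (_ : ι) (_ : ι) => (1 : ℝ)) := by
    ext i j
    simp [mul_apply]
  simp only [Matrix.add_mul, Matrix.sub_mul, Matrix.mul_add, Matrix.mul_sub, Matrix.smul_mul,
    Matrix.mul_smul, Matrix.one_mul, Matrix.mul_one, hN2, mul_allOnes_of_rowSum hrow,
    allOnes_mul_of_rowSum hsym hrow, hJJ, smul_add, smul_sub, smul_smul]
  match_scalars
  · linear_combination -hr
  · linear_combination hc
  · ring

theorem mul_sq_sub_mul_card_le_trace [DecidableEq ι] (hsym : N.IsSymm)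
    (hN2 : N * N = q • (1 : Matrix ι ι ℝ) + of (fun _ _ => 1))
    (hrow : ∀ i, ∑ j, N i j = q + 1) (hdiag : ∀ i, 0 ≤ N i i) {r c : ℝ} (hr : r ^ 2 = q)
    (hr0 : 0 < r) (hc : Fintype.card ι * c ^ 2 - 2 * (q + 1) * c + 1 = 0)
    (S : Finset ι) (hind : ∀ i ∈ S, ∀ j ∈ S, i ≠ j → N i j = 0) :
    c * (#S : ℝ) ^ 2 - r * #S ≤ N.trace := by
  have hJ : (of fun (_ : ι) (_ : ι) => (1 : ℝ)).IsSymm := IsSymm.ext fun _ _ => rfl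
  have hpsd : (N + r • 1 - c • of (fun _ _ => 1)).PosSemidef :=
    .of_mul_self_eq_smul ((hsym.add (isSymm_one.smul r)).sub (hJ.smul c)) (by positivity)
      (shifted_mul_self_eq_smul hsym hN2 hrow hr hc)
  have hform : 0 ≤ ∑ i ∈ S, ∑ j ∈ S, N i j + r * #S - c * #S ^ 2 := by
    have h := hpsd.dotProduct_mulVec_nonneg fun i => if i ∈ S then 1 else 0
    rw [star_trivial, indicator_dotProduct_mulVec_indicator] at h
    simp only [smul_of, Matrix.sub_apply, Matrix.add_apply, Matrix.smul_apply, one_apply,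
      smul_eq_mul, mul_ite, mul_one, mul_zero, of_apply, Pi.smul_apply, sum_sub_distrib,
      sum_add_distrib, sum_ite_eq, sum_const, nsmul_eq_mul, sum_ite_mem, inter_self] at h
    linarith
  linarith [sum_sum_le_trace_of_independent N hdiag S hind]

end Polarity

/-- Bound for general polarity graphs of `PG(2,q)`: if `N` is a symmetric 0-1 matrix of
size `n = q²+q+1` with `N² = qI + J`, row sums `q+1` and `a = tr(N)` absolute (looped)
vertices, then any independent set satisfies the stated bound. -/
theorem stmt15 (q : ℕ) (hq : 2 ≤ q) (n : ℕ) (hn : n = q ^ 2 + q + 1)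
    (N : Matrix (Fin n) (Fin n) ℝ) (hsym : N.IsSymm)
    (h01 : ∀ i j, N i j = 0 ∨ N i j = 1)
    (hN2 : N * N = (q : ℝ) • (1 : Matrix (Fin n) (Fin n) ℝ)
      + Matrix.of (fun _ _ => (1 : ℝ)))
    (hrow : ∀ i, ∑ j, N i j = (q : ℝ) + 1)
    (a : ℝ) (ha : a = Matrix.trace N)
    (S : Finset (Fin n)) (hind : ∀ i ∈ S, ∀ j ∈ S, i ≠ j → N i j = 0) :
    (S.card : ℝ) ≤
      (Real.sqrt q + Real.sqrt ((q : ℝ) + 4 * a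
          * ((q : ℝ) + Real.sqrt q + 1) / ((q : ℝ) ^ 2 + q + 1)))
        / (2 * ((q : ℝ) + Real.sqrt q + 1) / ((q : ℝ) ^ 2 + q + 1)) := by
  have hq0 : (0 : ℝ) < q := by exact_mod_cast (by omega : 0 < q)
  have hr : √(q : ℝ) ^ 2 = q := Real.sq_sqrt hq0.le
  set c : ℝ := ((q : ℝ) + √q + 1) / ((q : ℝ) ^ 2 + q + 1) with hc_def
  have hc : (Fintype.card (Fin n) : ℝ) * c ^ 2 - 2 * (q + 1) * c + 1 = 0 := by
    rw [Fintype.card_fin, hn, hc_def]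
    push_cast
    field_simp
    linear_combination hr
  have hdiag : ∀ i, 0 ≤ N i i := fun i => by rcases h01 i i with h | h <;> simp [h]
  have hbound :=
    mul_sq_sub_mul_card_le_trace hsym hN2 hrow hdiag hr (Real.sqrt_pos.mpr hq0) hc S hind
  calc (S.card : ℝ) ≤ (√q + √(√(q : ℝ) ^ 2 + 4 * a * c)) / (2 * c) :=
        le_of_mul_sq_sub_mul_le (by positivity) (ha ▸ hbound)
    _ = _ := by rw [hr, hc_def, ← mul_div_assoc, ← mul_div_assoc]
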